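/- arXiv:1809.10836 — 5 statements merged into one kernel-verified Lean document; each statement's English description precedes it below -/
import Mathlib

section
/- Let n ≥ 2 and fix i ∈ {2, …, n}. In B_n, let X_0 be a (possibly empty) product of band generators σ_{a,b} with 1 ≤ a < b ≤ i−1, and for each k = 1, …, i let X_k be a (possibly empty) product of band generators σ_{a,b} with k ≤ a < b ≤ n. Then the braid K = σ_{1,i}^{−1} · X_0 · X_i · σ_{i−1,i} · X_{i−1} · σ_{i−2,i−1} · X_{i−2} ⋯ σ_{1,2} · X_1 is strongly quasipositive. -/
/-- Relations for the braid group `Bₙ`: the generator `k : Fin (n-1)` represents `σ_{k+1}`,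
and we impose `σ_i σ_j = σ_j σ_i` for `|i - j| > 1` and `σ_i σ_{i+1} σ_i = σ_{i+1} σ_i σ_{i+1}`. -/
def braidRels (n : ℕ) : Set (FreeGroup (Fin (n - 1))) :=
  {r | ∃ i j : Fin (n - 1), (i : ℕ) + 1 < (j : ℕ) ∧
      r = FreeGroup.of i * FreeGroup.of j * (FreeGroup.of i)⁻¹ * (FreeGroup.of j)⁻¹} ∪
  {r | ∃ i j : Fin (n - 1), (j : ℕ) = (i : ℕ) + 1 ∧
      r = FreeGroup.of i * FreeGroup.of j * FreeGroup.of i *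
          (FreeGroup.of j * FreeGroup.of i * FreeGroup.of j)⁻¹}

/-- The braid group on `n` strands, presented with generators `σ_1, …, σ_{n-1}`. -/
abbrev BraidGroup (n : ℕ) : Type := PresentedGroup (braidRels n)

/-- The standard generator `σ_i` of `Bₙ`, for `1 ≤ i ≤ n - 1` (junk value `1` otherwise). -/
def sigma (n i : ℕ) : BraidGroup n :=
  if h : 1 ≤ i ∧ i ≤ n - 1 then PresentedGroup.of ⟨i - 1, by omega⟩ else 1

/-- The word `σ_{j-1} σ_{j-2} ⋯ σ_{i+1}`. -/
def bandConj (n i j : ℕ) : BraidGroup n :=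
  ((List.range (j - 1 - i)).map fun t => sigma n (j - 1 - t)).prod

/-- The band generator `σ_{i,j} = (σ_{j-1} σ_{j-2} ⋯ σ_{i+1}) σ_i (σ_{j-1} σ_{j-2} ⋯ σ_{i+1})⁻¹`.
In particular `σ_{i,i+1} = σ_i`. -/
def band (n i j : ℕ) : BraidGroup n :=
  bandConj n i j * sigma n i * (bandConj n i j)⁻¹

/-- The set of band generators `σ_{i,j}`, `1 ≤ i < j ≤ n`, of `Bₙ`. -/
def bandGens (n : ℕ) : Set (BraidGroup n) :=
  {x | ∃ i j : ℕ, 1 ≤ i ∧ i < j ∧ j ≤ n ∧ x = band n i j}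

/-- A braid is strongly quasipositive if it is a product of band generators, i.e. lies in the
submonoid generated by the `σ_{i,j}`, `1 ≤ i < j ≤ n`. -/
def StronglyQuasipositive (n : ℕ) (x : BraidGroup n) : Prop :=
  x ∈ Submonoid.closure (bandGens n)

/-- A braid is quasipositive if it lies in the submonoid generated by all conjugates
`α σ_k α⁻¹` of the standard generators. -/
def Quasipositive (n : ℕ) (x : BraidGroup n) : Prop :=
  x ∈ Submonoid.closure
    {x : BraidGroup n | ∃ (α : BraidGroup n) (k : ℕ), 1 ≤ k ∧ k ≤ n - 1 ∧ x = α * sigma n k * α⁻¹}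

/-! Conjugation by `σ_{1,c}` preserves strong quasipositivity of the products that occur: by the
band relations `σ_{a,c}⁻¹ σ_{a,b} σ_{a,c} = σ_{b,c}` and `σ_{a,b}⁻¹ σ_{b,c} σ_{a,b} = σ_{a,c}`
(`a < b < c`), and since `σ_{a,b}` commutes with bands nested inside it or disjoint from it, it maps
products of bands inside `[1, c - 1]`, and products of bands inside `[c, n]`, to products of bands.
Hence `K = (σ_{1,i}⁻¹ X₀ σ_{1,i}) (σ_{1,i}⁻¹ X_i σ_{1,i}) (σ_{1,i}⁻¹ T_i)` with
`T_j = σ_{j-1,j} X_{j-1} ⋯ σ_{1,2} X_1`, and `σ_{1,j}⁻¹ T_j` is strongly quasipositive by induction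
on `j`: as `σ_{1,j+1} = σ_j σ_{1,j} σ_j⁻¹`,
`σ_{1,j+1}⁻¹ T_{j+1} = σ_j (σ_{1,j}⁻¹ X_j σ_{1,j}) (σ_{1,j}⁻¹ T_j)`. -/

section BraidRelation

variable {G : Type*} [Group G] {x y : G}

lemma inv_mul_mul_of_braid (h : x * y * x = y * x * y) : x⁻¹ * y * x = y * x * y⁻¹ := by
  calc x⁻¹ * y * x = x⁻¹ * (y * x * y) * y⁻¹ := by group
    _ = y * x * y⁻¹ := by rw [← h]; group

lemma inv_mul_mul_conj_of_braid (h : x * y * x = y * x * y) :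
    (x⁻¹ * y * x)⁻¹ * x * (x⁻¹ * y * x) = y := by
  calc (x⁻¹ * y * x)⁻¹ * x * (x⁻¹ * y * x) = x⁻¹ * y⁻¹ * (x * y * x) := by group
    _ = y := by rw [h]; group

end BraidRelation

lemma conj_mem_closure_of_forall {G : Type*} [Group G] {S T : Set G} {g x : G}
    (hx : x ∈ Submonoid.closure S) (h : ∀ y ∈ S, g⁻¹ * y * g ∈ Submonoid.closure T) :
    g⁻¹ * x * g ∈ Submonoid.closure T := by
  have hle : Submonoid.closure S ≤ (Submonoid.closure T).comap (MulAut.conj g⁻¹).toMonoidHom :=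
    Submonoid.closure_le.2 fun y hy => by simpa using h y hy
  simpa using hle hx

namespace BraidGroup

variable {n : ℕ}

lemma sigma_eq_of {k : ℕ} (h1 : 1 ≤ k) (h2 : k ≤ n - 1) :
    sigma n k = PresentedGroup.of ⟨k - 1, by omega⟩ :=
  dif_pos ⟨h1, h2⟩

lemma sigma_eq_one {k : ℕ} (h : ¬(1 ≤ k ∧ k ≤ n - 1)) : sigma n k = 1 :=
  dif_neg h

lemma sigma_commute {k l : ℕ} (h : k + 2 ≤ l) : Commute (sigma n k) (sigma n l) := by
  by_cases hk : 1 ≤ k ∧ k ≤ n - 1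
  · by_cases hl : l ≤ n - 1
    · rw [sigma_eq_of hk.1 hk.2, sigma_eq_of (by omega) hl,
        ← commutatorElement_eq_one_iff_commute, commutatorElement_def]
      have hrel := PresentedGroup.one_of_mem (rels := braidRels n)
        (Or.inl ⟨⟨k - 1, by omega⟩, ⟨l - 1, by omega⟩, by simp; omega, rfl⟩)
      simp only [map_mul, map_inv] at hrel
      exact hrel
    · rw [sigma_eq_one (k := l) (by omega)]
      exact Commute.one_right _
  · rw [sigma_eq_one hk]
    exact Commute.one_left _

lemma sigma_braid {k : ℕ} (h1 : 1 ≤ k) (h2 : k + 2 ≤ n) :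
    sigma n k * sigma n (k + 1) * sigma n k = sigma n (k + 1) * sigma n k * sigma n (k + 1) := by
  rw [sigma_eq_of h1 (by omega), sigma_eq_of (by omega) (by omega)]
  have hrel := PresentedGroup.mk_eq_mk_of_mul_inv_mem (rels := braidRels n)
    (Or.inr ⟨⟨k - 1, by omega⟩, ⟨k, by omega⟩, by simp; omega, rfl⟩)
  simp only [map_mul] at hrel
  exact hrel

lemma bandConj_eq_one {a b : ℕ} (h : b ≤ a + 1) : bandConj n a b = 1 := by
  simp [bandConj, show b - 1 - a = 0 by omega]

lemma bandConj_succ {a b : ℕ} (h : a < b) :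
    bandConj n a (b + 1) = sigma n b * bandConj n a b := by
  rw [bandConj, show b + 1 - 1 - a = b - 1 - a + 1 by omega, List.prod_range_succ', bandConj]
  congr 2
  exact List.map_congr_left fun t ht => by congr 1; omega

lemma bandConj_split {a b c : ℕ} (hac : a ≤ c) (hcb : c < b) :
    bandConj n a b = bandConj n c b * bandConj n a (c + 1) := by
  induction b, hcb using Nat.le_induction with
  | base => rw [bandConj_eq_one le_rfl, one_mul]
  | succ b hcb ih => rw [bandConj_succ (by omega), bandConj_succ hcb, ih, mul_assoc]

lemma commute_bandConj {x : BraidGroup n} {a b : ℕ}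
    (h : ∀ m, a < m → m < b → Commute x (sigma n m)) : Commute x (bandConj n a b) := by
  refine Commute.list_prod_right _ _ fun y hy => ?_
  obtain ⟨t, ht, rfl⟩ := List.mem_map.1 hy
  rw [List.mem_range] at ht
  exact h _ (by omega) (by omega)

lemma sigma_mul_bandConj {a b m : ℕ} (ham : a < m) (hmb : m + 2 ≤ b) (hb : b ≤ n) :
    sigma n m * bandConj n a b = bandConj n a b * sigma n (m + 1) := by
  induction b, hmb using Nat.le_induction with
  | base =>
    have hc : Commute (sigma n (m + 1)) (bandConj n a m) :=
      commute_bandConj fun r _ hr => (sigma_commute (by omega)).symm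
    rw [bandConj_succ (by omega), bandConj_succ ham]
    simp only [← mul_assoc]
    rw [sigma_braid (by omega) (by omega), mul_assoc _ _ (bandConj n a m), hc.eq, ← mul_assoc]
  | succ b hmb ih =>
    rw [bandConj_succ (by omega), ← mul_assoc, (sigma_commute hmb).eq, mul_assoc,
      ih (by omega), mul_assoc]

lemma band_succ {a b : ℕ} (h : a < b) :
    band n a (b + 1) = sigma n b * band n a b * (sigma n b)⁻¹ := by
  rw [band, band, bandConj_succ h]
  group

lemma band_self_succ (a : ℕ) : band n a (a + 1) = sigma n a := by
  simp [band, bandConj_eq_one]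

lemma commute_band {x : BraidGroup n} {a b : ℕ} (hab : a < b)
    (h : ∀ m, a ≤ m → m < b → Commute x (sigma n m)) : Commute x (band n a b) := by
  have hc : Commute x (bandConj n a b) := commute_bandConj fun m ham hmb => h m ham.le hmb
  exact (hc.mul_right (h a le_rfl hab)).mul_right hc.inv_right

lemma sigma_commute_band_of_lt {a b m : ℕ} (hab : a < b) (hbm : b < m) :
    Commute (sigma n m) (band n a b) :=
  commute_band hab fun _ _ hr => (sigma_commute (by omega)).symm

lemma sigma_commute_band_of_nested {a b m : ℕ} (ham : a < m) (hmb : m + 2 ≤ b) (hb : b ≤ n) :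
    Commute (sigma n m) (band n a b) := by
  have hshift : bandConj n a b * sigma n (m + 1) * (bandConj n a b)⁻¹ = sigma n m := by
    rw [← sigma_mul_bandConj ham hmb hb]
    group
  rw [band, ← hshift]
  exact (sigma_commute (by omega)).symm.conj _

lemma band_commute_band_of_nested {a b c d : ℕ} (hac : a < c) (hcd : c < d) (hdb : d < b)
    (hb : b ≤ n) : Commute (band n a b) (band n c d) :=
  commute_band hcd fun _ hm hm' => (sigma_commute_band_of_nested (by omega) (by omega) hb).symm

lemma band_commute_band_of_lt {a b c d : ℕ} (hab : a < b) (hbc : b < c) (hcd : c < d) :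
    Commute (band n a b) (band n c d) :=
  commute_band hcd fun _ hm _ => (sigma_commute_band_of_lt hab (by omega)).symm

lemma band_braid {a b : ℕ} (ha : 1 ≤ a) (hab : a < b) (hb : b < n) :
    band n a b * sigma n b * band n a b = sigma n b * band n a b * sigma n b := by
  induction b, hab using Nat.le_induction with
  | base => rw [band_self_succ]; exact sigma_braid ha (by omega)
  | succ b hab ih =>
    -- Conjugation by `σ_{a,b}` sends `σ_{a,b+1}` to `σ_b` and fixes `σ_{b+1}`.
    have hβ : band n a (b + 1) = (band n a b)⁻¹ * sigma n b * band n a b := by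
      rw [band_succ hab, inv_mul_mul_of_braid (ih (by omega))]
    have hy : (band n a b)⁻¹ * sigma n (b + 1) * band n a b = sigma n (b + 1) :=
      (sigma_commute_band_of_lt hab (by omega)).symm.inv_mul_cancel
    rw [hβ, ← hy]
    calc _ = (band n a b)⁻¹ * (sigma n b * sigma n (b + 1) * sigma n b) * band n a b := by group
      _ = (band n a b)⁻¹ * (sigma n (b + 1) * sigma n b * sigma n (b + 1)) * band n a b := by
        rw [sigma_braid (by omega) (by omega)]
      _ = _ := by group

lemma band_eq_conj {a b c : ℕ} (ha : 1 ≤ a) (hab : a < b) (hbc : b < c) (hc : c ≤ n) :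
    band n a c =
      bandConj n b c * ((band n a b)⁻¹ * sigma n b * band n a b) * (bandConj n b c)⁻¹ := by
  rw [inv_mul_mul_of_braid (band_braid ha hab (by omega)), ← band_succ hab, band, band,
    bandConj_split hab.le hbc]
  group

lemma commute_band_bandConj {a b c : ℕ} (hab : a < b) :
    Commute (band n a b) (bandConj n b c) :=
  commute_bandConj fun _ hm _ => (sigma_commute_band_of_lt hab hm).symm

lemma band_inv_mul_band_mul_band_left {a b c : ℕ} (ha : 1 ≤ a) (hab : a < b) (hbc : b < c)
    (hc : c ≤ n) : (band n a c)⁻¹ * band n a b * band n a c = band n b c := by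
  have hF : (bandConj n b c)⁻¹ * band n a b * bandConj n b c = band n a b :=
    (commute_band_bandConj hab).symm.inv_mul_cancel
  have hbr := inv_mul_mul_conj_of_braid (band_braid ha hab (by omega : b < n))
  calc (band n a c)⁻¹ * band n a b * band n a c
      = bandConj n b c * (((band n a b)⁻¹ * sigma n b * band n a b)⁻¹ *
          ((bandConj n b c)⁻¹ * band n a b * bandConj n b c) *
          ((band n a b)⁻¹ * sigma n b * band n a b)) * (bandConj n b c)⁻¹ := by
        rw [band_eq_conj ha hab hbc hc]; group
    _ = band n b c := by rw [hF, hbr, band.eq_1 n b c]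

lemma band_inv_mul_band_mul_band_adjacent {a b c : ℕ} (ha : 1 ≤ a) (hab : a < b) (hbc : b < c)
    (hc : c ≤ n) : (band n a b)⁻¹ * band n b c * band n a b = band n a c := by
  have hF : (band n a b)⁻¹ * bandConj n b c = bandConj n b c * (band n a b)⁻¹ :=
    (commute_band_bandConj hab).inv_left.eq
  calc (band n a b)⁻¹ * band n b c * band n a b
      = ((band n a b)⁻¹ * bandConj n b c) * sigma n b * ((band n a b)⁻¹ * bandConj n b c)⁻¹ := by
        rw [band.eq_1 n b c]; group
    _ = band n a c := by rw [hF, band_eq_conj ha hab hbc hc]; group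

def bandsIn (n l r : ℕ) : Set (BraidGroup n) :=
  {x | ∃ a b : ℕ, l ≤ a ∧ a < b ∧ b ≤ r ∧ x = band n a b}

lemma band_mem_closure_bandsIn {l r a b : ℕ} (hla : l ≤ a) (hab : a < b) (hbr : b ≤ r) :
    band n a b ∈ Submonoid.closure (bandsIn n l r) :=
  Submonoid.subset_closure ⟨a, b, hla, hab, hbr, rfl⟩

lemma closure_bandsIn_mono {l l' r r' : ℕ} (hl : l ≤ l') (hr : r' ≤ r) :
    Submonoid.closure (bandsIn n l' r') ≤ Submonoid.closure (bandsIn n l r) :=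
  Submonoid.closure_mono fun _ ⟨a, b, hla, hab, hbr, hx⟩ => ⟨a, b, by omega, hab, by omega, hx⟩

lemma band_conj_mem_closure_bandsIn_below {a b c : ℕ} {x : BraidGroup n} (ha : 1 ≤ a)
    (hbc : b < c) (hc : c ≤ n) (hx : x ∈ Submonoid.closure (bandsIn n a b)) :
    (band n a c)⁻¹ * x * band n a c ∈ Submonoid.closure (bandsIn n a c) := by
  refine conj_mem_closure_of_forall hx ?_
  rintro _ ⟨a', b', ha', hab', hb', rfl⟩
  obtain rfl | ha' := ha'.eq_or_lt
  · rw [band_inv_mul_band_mul_band_left ha hab' (by omega) hc]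
    exact band_mem_closure_bandsIn hab'.le (by omega) le_rfl
  · rw [(band_commute_band_of_nested ha' hab' (by omega) hc).inv_mul_cancel]
    exact band_mem_closure_bandsIn ha'.le hab' (by omega)

lemma band_conj_mem_closure_bandsIn_above {a k : ℕ} {x : BraidGroup n} (ha : 1 ≤ a)
    (hak : a < k) (hx : x ∈ Submonoid.closure (bandsIn n k n)) :
    (band n a k)⁻¹ * x * band n a k ∈ Submonoid.closure (bandsIn n a n) := by
  refine conj_mem_closure_of_forall hx ?_
  rintro _ ⟨a', b', ha', hab', hb', rfl⟩
  obtain rfl | ha' := ha'.eq_or_lt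
  · rw [band_inv_mul_band_mul_band_adjacent ha hak hab' hb']
    exact band_mem_closure_bandsIn le_rfl (by omega) hb'
  · rw [(band_commute_band_of_lt hak ha' hab').inv_mul_cancel]
    exact band_mem_closure_bandsIn (by omega) hab' hb'

/-- `σ_{j-1,j} X_{j-1} σ_{j-2,j-1} X_{j-2} ⋯ σ_{1,2} X_1`. -/
def bandStair (n : ℕ) (X : ℕ → BraidGroup n) (j : ℕ) : BraidGroup n :=
  ((List.range (j - 1)).map fun t => band n (j - 1 - t) (j - t) * X (j - 1 - t)).prod

lemma bandStair_one (X : ℕ → BraidGroup n) : bandStair n X 1 = 1 := rfl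

lemma bandStair_succ (X : ℕ → BraidGroup n) {j : ℕ} (hj : 1 ≤ j) :
    bandStair n X (j + 1) = sigma n j * X j * bandStair n X j := by
  obtain ⟨k, rfl⟩ : ∃ k, j = k + 1 := ⟨j - 1, by omega⟩
  rw [bandStair, Nat.add_sub_cancel, List.prod_range_succ', bandStair, Nat.add_sub_cancel,
    Nat.sub_zero, Nat.sub_zero, band_self_succ]
  congr 2
  exact List.map_congr_left fun t _ => by congr 2 <;> omega

lemma band_one_inv_mul_bandStair_mem_closure (X : ℕ → BraidGroup n) {j : ℕ} (hj : 2 ≤ j)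
    (hjn : j ≤ n) (hX : ∀ k, 1 ≤ k → k < j → X k ∈ Submonoid.closure (bandsIn n k n)) :
    (band n 1 j)⁻¹ * bandStair n X j ∈ Submonoid.closure (bandGens n) := by
  induction j, hj using Nat.le_induction with
  | base =>
    rw [bandStair_succ X le_rfl, bandStair_one, band_self_succ, mul_one, inv_mul_cancel_left]
    exact hX 1 le_rfl one_lt_two
  | succ j hj ih =>
    rw [bandStair_succ X (by omega), band_succ (by omega)]
    have hsplit :
        (sigma n j * band n 1 j * (sigma n j)⁻¹)⁻¹ * (sigma n j * X j * bandStair n X j) =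
          sigma n j * ((band n 1 j)⁻¹ * X j * band n 1 j) * ((band n 1 j)⁻¹ * bandStair n X j) := by
      group
    rw [hsplit]
    refine mul_mem (mul_mem ?_ ?_) (ih (by omega) fun k hk hkj => hX k hk (by omega))
    · rw [← band_self_succ]
      exact band_mem_closure_bandsIn (by omega) (by omega) hjn
    · exact band_conj_mem_closure_bandsIn_above le_rfl (by omega) (hX j (by omega) (by omega))

end BraidGroup

open BraidGroup

theorem lemma_SQP1_general (n i : ℕ) (hi2 : 2 ≤ i) (hin : i ≤ n)
    (X0 : BraidGroup n)
    (hX0 : X0 ∈ Submonoid.closure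
      {x : BraidGroup n | ∃ a b : ℕ, 1 ≤ a ∧ a < b ∧ b ≤ i - 1 ∧ x = band n a b})
    (X : ℕ → BraidGroup n)
    (hX : ∀ k : ℕ, 1 ≤ k → k ≤ i → X k ∈ Submonoid.closure
      {x : BraidGroup n | ∃ a b : ℕ, k ≤ a ∧ a < b ∧ b ≤ n ∧ x = band n a b}) :
    StronglyQuasipositive n
      ((band n 1 i)⁻¹ * X0 * X i *
        ((List.range (i - 1)).map fun t => band n (i - 1 - t) (i - t) * X (i - 1 - t)).prod) := by
  have h0 : (band n 1 i)⁻¹ * X0 * band n 1 i ∈ Submonoid.closure (bandGens n) :=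
    closure_bandsIn_mono le_rfl hin (band_conj_mem_closure_bandsIn_below le_rfl (by omega) hin hX0)
  have hi : (band n 1 i)⁻¹ * X i * band n 1 i ∈ Submonoid.closure (bandGens n) :=
    band_conj_mem_closure_bandsIn_above le_rfl (by omega) (hX i (by omega) le_rfl)
  have hstair := band_one_inv_mul_bandStair_mem_closure X hi2 hin fun k hk hki => hX k hk hki.le
  have hsplit : (band n 1 i)⁻¹ * X0 * X i * bandStair n X i =
      ((band n 1 i)⁻¹ * X0 * band n 1 i) * ((band n 1 i)⁻¹ * X i * band n 1 i) *
        ((band n 1 i)⁻¹ * bandStair n X i) := by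
    group
  exact hsplit ▸ mul_mem (mul_mem h0 hi) hstair

/-- Lemma 3.3 of Hayden–Ito–Kawamuro: with `X₀` a product of band generators `σ_{a,b}`,
`1 ≤ a < b ≤ i-1`, and each `X_k` (`1 ≤ k ≤ i`) a product of band generators `σ_{a,b}`,
`k ≤ a < b ≤ n`, the braid
`K = σ_{1,i}⁻¹ X₀ X_i σ_{i-1,i} X_{i-1} σ_{i-2,i-1} X_{i-2} ⋯ σ_{1,2} X_1`
is strongly quasipositive. -/
theorem lemma_SQP1 (n i : ℕ) (hn : 2 ≤ n) (hi2 : 2 ≤ i) (hin : i ≤ n)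
    (X0 : BraidGroup n)
    (hX0 : X0 ∈ Submonoid.closure
      {x : BraidGroup n | ∃ a b : ℕ, 1 ≤ a ∧ a < b ∧ b ≤ i - 1 ∧ x = band n a b})
    (X : ℕ → BraidGroup n)
    (hX : ∀ k : ℕ, 1 ≤ k → k ≤ i → X k ∈ Submonoid.closure
      {x : BraidGroup n | ∃ a b : ℕ, k ≤ a ∧ a < b ∧ b ≤ n ∧ x = band n a b}) :
    StronglyQuasipositive n
      ((band n 1 i)⁻¹ * X0 * X i *
        ((List.range (i - 1)).map fun t => band n (i - 1 - t) (i - t) * X (i - 1 - t)).prod) :=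
  lemma_SQP1_general n i hi2 hin X0 hX0 X hX
end

section
/- In B_n, if P is a (possibly empty) product of the generators σ_2, …, σ_{n−1} and Q is a (possibly empty) product of the generators σ_1, …, σ_{n−1}, then the braid σ_1^{−1} P σ_1 Q is strongly quasipositive. -/
/-!
Conjugation by `σ₁⁻¹` fixes `σ_k` for `k ≥ 3` (far commutativity) and, by the braid relation,
sends `σ₂` to `σ₂ σ₁ σ₂⁻¹ = σ_{1,3}`. Hence `σ₁⁻¹ P σ₁` is a product of band generators, and so
is the positive braid `Q`, since `σ_k = σ_{k,k+1}`.
-/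

lemma mk_eq_one_of_mem_braidRels {n : ℕ} {r : FreeGroup (Fin (n - 1))} (hr : r ∈ braidRels n) :
    PresentedGroup.mk (braidRels n) r = 1 :=
  (QuotientGroup.eq_one_iff r).mpr (Subgroup.subset_normalClosure hr)

lemma sigma_eq_of {n k : ℕ} (h1 : 1 ≤ k) (h2 : k ≤ n - 1) :
    sigma n k = PresentedGroup.of ⟨k - 1, by omega⟩ :=
  dif_pos ⟨h1, h2⟩

-- No range hypotheses are needed: out of range, `sigma` is `1`.
lemma sigma_mul_sigma_comm {n i j : ℕ} (h : i + 1 < j) :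
    sigma n i * sigma n j = sigma n j * sigma n i := by
  by_cases hi : 1 ≤ i ∧ i ≤ n - 1
  · by_cases hj : 1 ≤ j ∧ j ≤ n - 1
    · have hrel := mk_eq_one_of_mem_braidRels (n := n)
        (Or.inl ⟨⟨i - 1, by omega⟩, ⟨j - 1, by omega⟩, by simp only; omega, rfl⟩)
      simp only [map_mul, map_inv] at hrel
      rw [sigma_eq_of hi.1 hi.2, sigma_eq_of hj.1 hj.2]
      exact mul_inv_eq_iff_eq_mul.mp (mul_inv_eq_one.mp hrel)
    · simp [sigma, hj]
  · simp [sigma, hi]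

lemma sigma_mul_sigma_succ_mul_sigma {n i : ℕ} (h1 : 1 ≤ i) (h2 : i + 1 ≤ n - 1) :
    sigma n i * sigma n (i + 1) * sigma n i = sigma n (i + 1) * sigma n i * sigma n (i + 1) := by
  have hrel := mk_eq_one_of_mem_braidRels (n := n)
    (Or.inr ⟨⟨i - 1, by omega⟩, ⟨i, by omega⟩, by simp only; omega, rfl⟩)
  simp only [map_mul, map_inv] at hrel
  rw [sigma_eq_of h1 (by omega), sigma_eq_of (by omega) h2]
  simp only [Nat.add_sub_cancel]
  exact mul_inv_eq_one.mp hrel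

lemma inv_sigma_mul_sigma_succ_mul_sigma {n i : ℕ} (h1 : 1 ≤ i) (h2 : i + 1 ≤ n - 1) :
    (sigma n i)⁻¹ * sigma n (i + 1) * sigma n i =
      sigma n (i + 1) * sigma n i * (sigma n (i + 1))⁻¹ := by
  rw [eq_mul_inv_iff_mul_eq, mul_assoc, mul_assoc, inv_mul_eq_iff_eq_mul, ← mul_assoc,
    ← mul_assoc, sigma_mul_sigma_succ_mul_sigma h1 h2]

lemma band_add_two {n i : ℕ} :
    band n i (i + 2) = sigma n (i + 1) * sigma n i * (sigma n (i + 1))⁻¹ := by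
  simp [band, bandConj]

lemma sigma_mem_bandGens {n k : ℕ} (h1 : 1 ≤ k) (h2 : k ≤ n - 1) : sigma n k ∈ bandGens n :=
  ⟨k, k + 1, h1, by omega, by omega, by simp [band, bandConj]⟩

lemma closure_sigma_le_closure_bandGens (n : ℕ) :
    Submonoid.closure {x : BraidGroup n | ∃ k : ℕ, 1 ≤ k ∧ k ≤ n - 1 ∧ x = sigma n k} ≤
      Submonoid.closure (bandGens n) :=
  Submonoid.closure_mono (by rintro _ ⟨k, h1, h2, rfl⟩; exact sigma_mem_bandGens h1 h2)

lemma inv_sigma_one_mul_sigma_mul_sigma_one_mem_bandGens {n k : ℕ} (h1 : 2 ≤ k)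
    (h2 : k ≤ n - 1) : (sigma n 1)⁻¹ * sigma n k * sigma n 1 ∈ bandGens n := by
  rcases h1.eq_or_lt with rfl | h3
  · rw [inv_sigma_mul_sigma_succ_mul_sigma le_rfl h2, ← band_add_two]
    exact ⟨1, 3, le_rfl, by omega, by omega, rfl⟩
  · rw [mul_assoc, ← sigma_mul_sigma_comm h3, inv_mul_cancel_left]
    exact sigma_mem_bandGens (by omega) h2

lemma closure_sigma_le_comap_conj_closure_bandGens (n : ℕ) :
    Submonoid.closure {x : BraidGroup n | ∃ k : ℕ, 2 ≤ k ∧ k ≤ n - 1 ∧ x = sigma n k} ≤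
      (Submonoid.closure (bandGens n)).comap (MulAut.conj (sigma n 1)⁻¹).toMonoidHom := by
  rw [Submonoid.closure_le]
  rintro _ ⟨k, h1, h2, rfl⟩
  apply Submonoid.subset_closure
  simpa using inv_sigma_one_mul_sigma_mul_sigma_one_mem_bandGens h1 h2

theorem sqp_of_conj_form_general (n : ℕ) (P Q : BraidGroup n)
    (hP : P ∈ Submonoid.closure {x : BraidGroup n | ∃ k : ℕ, 2 ≤ k ∧ k ≤ n - 1 ∧ x = sigma n k})
    (hQ : Q ∈ Submonoid.closure {x : BraidGroup n | ∃ k : ℕ, 1 ≤ k ∧ k ≤ n - 1 ∧ x = sigma n k}) :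
    StronglyQuasipositive n ((sigma n 1)⁻¹ * P * sigma n 1 * Q) := by
  have hconj : (sigma n 1)⁻¹ * P * sigma n 1 ∈ Submonoid.closure (bandGens n) := by
    simpa using closure_sigma_le_comap_conj_closure_bandGens n hP
  exact mul_mem hconj (closure_sigma_le_closure_bandGens n hQ)

/-- If `P` is a product of the generators `σ_2, …, σ_{n-1}` and `Q` is a product of the
generators `σ_1, …, σ_{n-1}`, then `σ_1⁻¹ P σ_1 Q` is strongly quasipositive. -/
theorem sqp_of_conj_form (n : ℕ) (hn : 2 ≤ n) (P Q : BraidGroup n)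
    (hP : P ∈ Submonoid.closure {x : BraidGroup n | ∃ k : ℕ, 2 ≤ k ∧ k ≤ n - 1 ∧ x = sigma n k})
    (hQ : Q ∈ Submonoid.closure {x : BraidGroup n | ∃ k : ℕ, 1 ≤ k ∧ k ≤ n - 1 ∧ x = sigma n k}) :
    StronglyQuasipositive n ((sigma n 1)⁻¹ * P * sigma n 1 * Q) :=
  sqp_of_conj_form_general n P Q hP hQ
end

section
/- In B_3 set a_1 = σ_1, a_2 = σ_2, and a_3 = σ_2 σ_1 σ_2^{−1} (the band generator σ_{1,3}). For all integers n_1, n_2, n_3 ≥ 1 and every (possibly empty) product W of the elements a_1, a_2, a_3, the braid a_1^{−1} a_2^{n_1} a_3^{n_2} a_1^{n_3} W is quasipositive. -/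
/-! Since `n₃ ≥ 1`, the braid equals `a₁⁻¹ (a₂^{n₁} a₃^{n₂} a₁^{n₃-1}) a₁ · W`. Each `aᵢ` is a
conjugate of a standard generator, and quasipositive braids form a submonoid that is closed
under conjugation; so both factors are quasipositive. -/

theorem Submonoid.conj_mem_closure {G : Type*} [Group G] {S : Set G}
    (hS : ∀ α, ∀ s ∈ S, α * s * α⁻¹ ∈ S) (α : G) {x : G} (hx : x ∈ Submonoid.closure S) :
    α * x * α⁻¹ ∈ Submonoid.closure S := by
  have hmap : (Submonoid.closure S).map (MulAut.conj α).toMonoidHom ≤ Submonoid.closure S := by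
    rw [MonoidHom.map_mclosure, Submonoid.closure_le]
    rintro _ ⟨s, hs, rfl⟩
    exact Submonoid.subset_closure (hS α s hs)
  exact hmap ⟨x, hx, rfl⟩

namespace Quasipositive

variable {n : ℕ}

theorem mul {x y : BraidGroup n} (hx : Quasipositive n x) (hy : Quasipositive n y) :
    Quasipositive n (x * y) :=
  Submonoid.mul_mem _ hx hy

theorem conj {x : BraidGroup n} (hx : Quasipositive n x) (α : BraidGroup n) :
    Quasipositive n (α * x * α⁻¹) := by
  refine Submonoid.conj_mem_closure ?_ α hx
  rintro β _ ⟨γ, k, hk1, hkn, rfl⟩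
  exact ⟨β * γ, k, hk1, hkn, by group⟩

theorem of_mem_closure {T : Set (BraidGroup n)} (hT : ∀ t ∈ T, Quasipositive n t) {x : BraidGroup n}
    (hx : x ∈ Submonoid.closure T) : Quasipositive n x :=
  Submonoid.closure_le.mpr hT hx

end Quasipositive

theorem quasipositive_conj_sigma {n k : ℕ} (hk1 : 1 ≤ k) (hkn : k ≤ n - 1) (α : BraidGroup n) :
    Quasipositive n (α * sigma n k * α⁻¹) :=
  Submonoid.subset_closure ⟨α, k, hk1, hkn, rfl⟩

theorem quasipositive_sigma {n k : ℕ} (hk1 : 1 ≤ k) (hkn : k ≤ n - 1) :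
    Quasipositive n (sigma n k) := by
  simpa using quasipositive_conj_sigma hk1 hkn 1

theorem quasipositive_of_mem_closure_three_band_generators {x : BraidGroup 3}
    (hx : x ∈ Submonoid.closure {sigma 3 1, sigma 3 2, sigma 3 2 * sigma 3 1 * (sigma 3 2)⁻¹}) :
    Quasipositive 3 x := by
  refine Quasipositive.of_mem_closure ?_ hx
  rintro t (rfl | rfl | rfl)
  · exact quasipositive_sigma le_rfl (by norm_num)
  · exact quasipositive_sigma (by norm_num) le_rfl
  · exact quasipositive_conj_sigma le_rfl (by norm_num) _

theorem three_braid_NP_quasipositive_general (n1 n2 n3 : ℕ)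
    (h3 : 1 ≤ n3) (W : BraidGroup 3)
    (hW : W ∈ Submonoid.closure
      {sigma 3 1, sigma 3 2, sigma 3 2 * sigma 3 1 * (sigma 3 2)⁻¹}) :
    Quasipositive 3 ((sigma 3 1)⁻¹ * sigma 3 2 ^ n1 *
      (sigma 3 2 * sigma 3 1 * (sigma 3 2)⁻¹) ^ n2 * sigma 3 1 ^ n3 * W) := by
  set A : Set (BraidGroup 3) := {sigma 3 1, sigma 3 2, sigma 3 2 * sigma 3 1 * (sigma 3 2)⁻¹}
  obtain ⟨m, rfl⟩ : ∃ m, n3 = m + 1 := ⟨n3 - 1, by omega⟩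
  set P := sigma 3 2 ^ n1 * (sigma 3 2 * sigma 3 1 * (sigma 3 2)⁻¹) ^ n2 * sigma 3 1 ^ m
  have hP : P ∈ Submonoid.closure A := by
    refine Submonoid.mul_mem _ (Submonoid.mul_mem _ ?_ ?_) ?_ <;>
      exact Submonoid.pow_mem _ (Submonoid.subset_closure (by simp [A])) _
  have hrewrite : (sigma 3 1)⁻¹ * sigma 3 2 ^ n1 *
      (sigma 3 2 * sigma 3 1 * (sigma 3 2)⁻¹) ^ n2 * sigma 3 1 ^ (m + 1) * W =
      (sigma 3 1)⁻¹ * P * (sigma 3 1)⁻¹⁻¹ * W := by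
    simp only [P, pow_succ, inv_inv, mul_assoc]
  rw [hrewrite]
  exact ((quasipositive_of_mem_closure_three_band_generators hP).conj _).mul
    (quasipositive_of_mem_closure_three_band_generators hW)

/-- In `B₃` with `a₁ = σ₁`, `a₂ = σ₂`, `a₃ = σ₂ σ₁ σ₂⁻¹`: for `n₁, n₂, n₃ ≥ 1` and any product
`W` of the `aᵢ`, the braid `a₁⁻¹ a₂^{n₁} a₃^{n₂} a₁^{n₃} W` is quasipositive. -/
theorem three_braid_NP_quasipositive (n1 n2 n3 : ℕ)
    (h1 : 1 ≤ n1) (h2 : 1 ≤ n2) (h3 : 1 ≤ n3) (W : BraidGroup 3)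
    (hW : W ∈ Submonoid.closure
      {sigma 3 1, sigma 3 2, sigma 3 2 * sigma 3 1 * (sigma 3 2)⁻¹}) :
    Quasipositive 3 ((sigma 3 1)⁻¹ * sigma 3 2 ^ n1 *
      (sigma 3 2 * sigma 3 1 * (sigma 3 2)⁻¹) ^ n2 * sigma 3 1 ^ n3 * W) :=
  three_braid_NP_quasipositive_general n1 n2 n3 h3 W hW
end

section
/- In B_4, if β_0, β_1, β_2, β_3, β_4 are strongly quasipositive braids (possibly trivial), then the braid σ_{1,2}^{−1} β_0 σ_{2,3} β_1 σ_{2,4} β_2 σ_{1,3} β_3 σ_{2,4} β_4 is quasipositive. -/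
lemma rel_eq_one {n : ℕ} {r : FreeGroup (Fin (n-1))} (hr : r ∈ braidRels n) :
    (QuotientGroup.mk r : BraidGroup n) = 1 :=
  (QuotientGroup.eq_one_iff r).mpr (Subgroup.subset_normalClosure hr)

lemma braid_adjacent {i j : Fin (4-1)} (hij : (j:ℕ) = (i:ℕ) + 1) :
    (PresentedGroup.of i : BraidGroup 4) * PresentedGroup.of j * PresentedGroup.of i
      = PresentedGroup.of j * PresentedGroup.of i * PresentedGroup.of j := by
  have hr : (FreeGroup.of i * FreeGroup.of j * FreeGroup.of i *
      (FreeGroup.of j * FreeGroup.of i * FreeGroup.of j)⁻¹) ∈ braidRels 4 :=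
    Or.inr ⟨i, j, hij, rfl⟩
  have h : (PresentedGroup.of i : BraidGroup 4) * PresentedGroup.of j * PresentedGroup.of i *
      (PresentedGroup.of j * PresentedGroup.of i * PresentedGroup.of j)⁻¹ = 1 := rel_eq_one hr
  exact mul_inv_eq_one.mp h

lemma braid_commute {i j : Fin (4-1)} (hij : (i:ℕ) + 1 < (j:ℕ)) :
    (PresentedGroup.of i : BraidGroup 4) * PresentedGroup.of j
      = PresentedGroup.of j * PresentedGroup.of i := by
  have hr : (FreeGroup.of i * FreeGroup.of j * (FreeGroup.of i)⁻¹ * (FreeGroup.of j)⁻¹)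
      ∈ braidRels 4 := Or.inl ⟨i, j, hij, rfl⟩
  have h : (PresentedGroup.of i : BraidGroup 4) * PresentedGroup.of j *
      (PresentedGroup.of i)⁻¹ * (PresentedGroup.of j)⁻¹ = 1 := rel_eq_one hr
  have h1 : (PresentedGroup.of i : BraidGroup 4) * PresentedGroup.of j *
      (PresentedGroup.of i)⁻¹ = PresentedGroup.of j := mul_inv_eq_one.mp h
  exact mul_inv_eq_iff_eq_mul.mp h1

lemma sigma_eq (i : ℕ) (h1 : 1 ≤ i) (h2 : i ≤ 3) :
    sigma 4 i = PresentedGroup.of (⟨i-1, by omega⟩ : Fin (4-1)) := by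
  simp [sigma, h1, h2]

lemma rel12 : sigma 4 1 * sigma 4 2 * sigma 4 1 = sigma 4 2 * sigma 4 1 * sigma 4 2 := by
  rw [sigma_eq 1 (by norm_num) (by norm_num), sigma_eq 2 (by norm_num) (by norm_num)]
  exact braid_adjacent rfl

lemma rel23 : sigma 4 2 * sigma 4 3 * sigma 4 2 = sigma 4 3 * sigma 4 2 * sigma 4 3 := by
  rw [sigma_eq 2 (by norm_num) (by norm_num), sigma_eq 3 (by norm_num) (by norm_num)]
  exact braid_adjacent rfl

lemma rel13 : sigma 4 1 * sigma 4 3 = sigma 4 3 * sigma 4 1 := by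
  rw [sigma_eq 1 (by norm_num) (by norm_num), sigma_eq 3 (by norm_num) (by norm_num)]
  exact braid_commute (by norm_num)

lemma band12 : band 4 1 2 = sigma 4 1 := by
  show bandConj 4 1 2 * sigma 4 1 * (bandConj 4 1 2)⁻¹ = sigma 4 1
  have : bandConj 4 1 2 = 1 := by
    simp [bandConj]
  rw [this]; group

lemma band23 : band 4 2 3 = sigma 4 2 := by
  show bandConj 4 2 3 * sigma 4 2 * (bandConj 4 2 3)⁻¹ = sigma 4 2
  have : bandConj 4 2 3 = 1 := by
    simp [bandConj]
  rw [this]; group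

lemma band24 : band 4 2 4 = sigma 4 3 * sigma 4 2 * (sigma 4 3)⁻¹ := by
  show bandConj 4 2 4 * sigma 4 2 * (bandConj 4 2 4)⁻¹ = _
  have : bandConj 4 2 4 = sigma 4 3 := by
    simp [bandConj, List.range_succ]
  rw [this]

lemma band13 : band 4 1 3 = sigma 4 2 * sigma 4 1 * (sigma 4 2)⁻¹ := by
  show bandConj 4 1 3 * sigma 4 1 * (bandConj 4 1 3)⁻¹ = _
  have : bandConj 4 1 3 = sigma 4 2 := by
    simp [bandConj, List.range_succ]
  rw [this]

lemma qp_conj_gen (α : BraidGroup 4) (k : ℕ) (h1 : 1 ≤ k) (h2 : k ≤ 3) :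
    Quasipositive 4 (α * sigma 4 k * α⁻¹) :=
  Submonoid.subset_closure ⟨α, k, h1, h2, rfl⟩

lemma qp_mul {x y : BraidGroup 4} (hx : Quasipositive 4 x) (hy : Quasipositive 4 y) :
    Quasipositive 4 (x * y) := mul_mem hx hy

lemma qp_conj {x : BraidGroup 4} (α : BraidGroup 4) (hx : Quasipositive 4 x) :
    Quasipositive 4 (α * x * α⁻¹) := by
  unfold Quasipositive at *
  induction hx using Submonoid.closure_induction with
  | mem y hy =>
      obtain ⟨β, k, hk1, hk2, rfl⟩ := hy
      have : α * (β * sigma 4 k * β⁻¹) * α⁻¹ = (α * β) * sigma 4 k * (α * β)⁻¹ := by group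
      rw [this]
      exact Submonoid.subset_closure ⟨α * β, k, hk1, hk2, rfl⟩
  | one => simpa using one_mem _
  | mul y z _ _ hy hz =>
      have : α * (y * z) * α⁻¹ = (α * y * α⁻¹) * (α * z * α⁻¹) := by group
      rw [this]
      exact mul_mem hy hz

lemma sqp_qp {x : BraidGroup 4} (hx : StronglyQuasipositive 4 x) : Quasipositive 4 x := by
  unfold StronglyQuasipositive at hx
  refine Submonoid.closure_le.mpr ?_ hx
  rintro y ⟨i, j, hi, hij, hj, rfl⟩
  exact Submonoid.subset_closure ⟨bandConj 4 i j, i, hi, by omega, rfl⟩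


/-- In `B₄`, for strongly quasipositive `β₀, …, β₄`, the braid
`σ_{1,2}⁻¹ β₀ σ_{2,3} β₁ σ_{2,4} β₂ σ_{1,3} β₃ σ_{2,4} β₄` is quasipositive. -/
theorem claim_R_case3 (β0 β1 β2 β3 β4 : BraidGroup 4)
    (h0 : StronglyQuasipositive 4 β0) (h1 : StronglyQuasipositive 4 β1)
    (h2 : StronglyQuasipositive 4 β2) (h3 : StronglyQuasipositive 4 β3)
    (h4 : StronglyQuasipositive 4 β4) :
    Quasipositive 4
      ((band 4 1 2)⁻¹ * β0 * band 4 2 3 * β1 * band 4 2 4 * β2 * band 4 1 3 * β3 *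
        band 4 2 4 * β4) := by
  rw [band12, band23, band24, band13]
  have c23 : sigma 4 3 * sigma 4 2 * (sigma 4 3)⁻¹ = (sigma 4 2)⁻¹ * sigma 4 3 * sigma 4 2 := by
    calc sigma 4 3 * sigma 4 2 * (sigma 4 3)⁻¹
        = (sigma 4 2)⁻¹ * (sigma 4 2 * sigma 4 3 * sigma 4 2) * (sigma 4 3)⁻¹ := by group
      _ = (sigma 4 2)⁻¹ * (sigma 4 3 * sigma 4 2 * sigma 4 3) * (sigma 4 3)⁻¹ := by rw [rel23]
      _ = (sigma 4 2)⁻¹ * sigma 4 3 * sigma 4 2 := by group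
  have c13 : (sigma 4 1)⁻¹ * sigma 4 3 = sigma 4 3 * (sigma 4 1)⁻¹ := by
    calc (sigma 4 1)⁻¹ * sigma 4 3
        = (sigma 4 1)⁻¹ * (sigma 4 3 * sigma 4 1) * (sigma 4 1)⁻¹ := by group
      _ = (sigma 4 1)⁻¹ * (sigma 4 1 * sigma 4 3) * (sigma 4 1)⁻¹ := by rw [← rel13]
      _ = sigma 4 3 * (sigma 4 1)⁻¹ := by group
  have hP4 : (sigma 4 1)⁻¹ * sigma 4 2 * (sigma 4 3 * sigma 4 2 * (sigma 4 3)⁻¹) * (sigma 4 2 * sigma 4 1 * (sigma 4 2)⁻¹) * (sigma 4 3 * sigma 4 2 * (sigma 4 3)⁻¹) = ((sigma 4 3 * (sigma 4 1)⁻¹) * sigma 4 2 * (sigma 4 3 * (sigma 4 1)⁻¹)⁻¹) * ((sigma 4 3 * (sigma 4 1)⁻¹) * sigma 4 2 * (sigma 4 3 * (sigma 4 1)⁻¹)⁻¹) * ((sigma 4 3 * (sigma 4 2)⁻¹) * sigma 4 3 * (sigma 4 3 * (sigma 4 2)⁻¹)⁻¹) := by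
    calc (sigma 4 1)⁻¹ * sigma 4 2 * (sigma 4 3 * sigma 4 2 * (sigma 4 3)⁻¹) * (sigma 4 2 * sigma 4 1 * (sigma 4 2)⁻¹) * (sigma 4 3 * sigma 4 2 * (sigma 4 3)⁻¹)
        = (sigma 4 1)⁻¹ * sigma 4 2 * ((sigma 4 2)⁻¹ * sigma 4 3 * sigma 4 2) * (sigma 4 2 * sigma 4 1 * (sigma 4 2)⁻¹) * ((sigma 4 2)⁻¹ * sigma 4 3 * sigma 4 2) := by
          rw [← c23]
      _ = ((sigma 4 1)⁻¹ * sigma 4 3) * (sigma 4 2 * sigma 4 2 * sigma 4 1 * (sigma 4 2)⁻¹) * ((sigma 4 2)⁻¹ * sigma 4 3 * sigma 4 2) := by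
          group
      _ = (sigma 4 3 * (sigma 4 1)⁻¹) * (sigma 4 2 * sigma 4 2 * sigma 4 1 * (sigma 4 2)⁻¹) * ((sigma 4 2)⁻¹ * sigma 4 3 * sigma 4 2) := by
          rw [c13]
      _ = (sigma 4 3 * (sigma 4 1)⁻¹) * (sigma 4 2 * sigma 4 2 * sigma 4 1 * (sigma 4 2)⁻¹) * (sigma 4 3 * sigma 4 2 * (sigma 4 3)⁻¹) := by rw [c23]
      _ = ((sigma 4 3 * (sigma 4 1)⁻¹) * sigma 4 2 * (sigma 4 3 * (sigma 4 1)⁻¹)⁻¹) * ((sigma 4 3 * (sigma 4 1)⁻¹) * sigma 4 2 * (sigma 4 3 * (sigma 4 1)⁻¹)⁻¹) * ((sigma 4 3 * (sigma 4 2)⁻¹) * sigma 4 3 * (sigma 4 3 * (sigma 4 2)⁻¹)⁻¹) := by group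
  have key : (sigma 4 1)⁻¹ * β0 * sigma 4 2 * β1 * (sigma 4 3 * sigma 4 2 * (sigma 4 3)⁻¹) * β2 * (sigma 4 2 * sigma 4 1 * (sigma 4 2)⁻¹) * β3 * (sigma 4 3 * sigma 4 2 * (sigma 4 3)⁻¹) * β4 = (((sigma 4 1)⁻¹) * β0 * ((sigma 4 1)⁻¹)⁻¹) * (((sigma 4 1)⁻¹ * sigma 4 2) * β1 * ((sigma 4 1)⁻¹ * sigma 4 2)⁻¹) * (((sigma 4 1)⁻¹ * sigma 4 2 * (sigma 4 3 * sigma 4 2 * (sigma 4 3)⁻¹)) * β2 * ((sigma 4 1)⁻¹ * sigma 4 2 * (sigma 4 3 * sigma 4 2 * (sigma 4 3)⁻¹))⁻¹) * (((sigma 4 1)⁻¹ * sigma 4 2 * (sigma 4 3 * sigma 4 2 * (sigma 4 3)⁻¹) * (sigma 4 2 * sigma 4 1 * (sigma 4 2)⁻¹)) * β3 * ((sigma 4 1)⁻¹ * sigma 4 2 * (sigma 4 3 * sigma 4 2 * (sigma 4 3)⁻¹) * (sigma 4 2 * sigma 4 1 * (sigma 4 2)⁻¹))⁻¹) * (((sigma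 4 1)⁻¹ * sigma 4 2 * (sigma 4 3 * sigma 4 2 * (sigma 4 3)⁻¹) * (sigma 4 2 * sigma 4 1 * (sigma 4 2)⁻¹) * (sigma 4 3 * sigma 4 2 * (sigma 4 3)⁻¹)) * β4 * ((sigma 4 1)⁻¹ * sigma 4 2 * (sigma 4 3 * sigma 4 2 * (sigma 4 3)⁻¹) * (sigma 4 2 * sigma 4 1 * (sigma 4 2)⁻¹) * (sigma 4 3 * sigma 4 2 * (sigma 4 3)⁻¹))⁻¹) * ((sigma 4 1)⁻¹ * sigma 4 2 * (sigma 4 3 * sigma 4 2 * (sigma 4 3)⁻¹) * (sigma 4 2 * sigma 4 1 * (sigma 4 2)⁻¹) * (sigma 4 3 * sigma 4 2 * (sigma 4 3)⁻¹)) := by group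
  rw [key, hP4]
  exact qp_mul (qp_mul (qp_mul (qp_mul (qp_mul (qp_conj _ (sqp_qp h0))
    (qp_conj _ (sqp_qp h1))) (qp_conj _ (sqp_qp h2))) (qp_conj _ (sqp_qp h3)))
    (qp_conj _ (sqp_qp h4)))
    (qp_mul (qp_mul (qp_conj_gen _ 2 (by norm_num) (by norm_num))
      (qp_conj_gen _ 2 (by norm_num) (by norm_num)))
      (qp_conj_gen _ 3 (by norm_num) (by norm_num)))
end

section
/- In B_4, for all integers v, w, y ≥ 0 and x, z ≥ 1, the braid σ_{1,2}^{−1} σ_{2,4}^{v} σ_{2,3}^{w} σ_{1,3}^{x} σ_{3,4}^{y} σ_{2,4}^{z} is conjugate in B_4 to σ_{2,3}^{v} σ_{3,4}^{−1} σ_{2,3}^{w} σ_{1,3}^{x} σ_{3,4}^{y+1} σ_{2,3}^{z−1} σ_{1,3}^{−1} σ_{2,3}. -/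
/-!
Writing `a, b, c` for `σ₁, σ₂, σ₃`, the band generators involved are `σ_{1,2} = a`, `σ_{2,3} = b`,
`σ_{3,4} = c`, `σ_{1,3} = b a b⁻¹` and `σ_{2,4} = c b c⁻¹`, so all powers of band generators
become conjugates of powers of `a, b, c`. Conjugating by `a c⁻¹` then turns one word into the
other, using only that the far-apart generators `a` and `c` commute.
-/

lemma sigma_eq_of_s11 (n : ℕ) (k : Fin (n - 1)) :
    sigma n (k + 1) = PresentedGroup.of (rels := braidRels n) k := by
  simp [sigma, show (k : ℕ) + 1 ≤ n - 1 from k.isLt]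

lemma band_self_add_one (n i : ℕ) : band n i (i + 1) = sigma n i := by
  simp [band, bandConj]

lemma band_self_add_two (n i : ℕ) :
    band n i (i + 2) = sigma n (i + 1) * sigma n i * (sigma n (i + 1))⁻¹ := by
  simp [band, bandConj, List.range_succ]

lemma commute_of_braidRels {n : ℕ} (i j : Fin (n - 1)) (hij : (i : ℕ) + 1 < j) :
    Commute (PresentedGroup.of (rels := braidRels n) i) (PresentedGroup.of j) := by
  have hrel : FreeGroup.of i * FreeGroup.of j * (FreeGroup.of i)⁻¹ * (FreeGroup.of j)⁻¹ ∈
      braidRels n := Or.inl ⟨i, j, hij, rfl⟩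
  have h := PresentedGroup.one_of_mem hrel
  simp only [map_mul, map_inv] at h
  rwa [mul_inv_eq_one, mul_inv_eq_iff_eq_mul] at h

lemma commute_sigma_of_add_two_le {n i j : ℕ} (hij : i + 2 ≤ j) :
    Commute (sigma n i) (sigma n j) := by
  by_cases hi : 1 ≤ i ∧ i ≤ n - 1
  · by_cases hj : 1 ≤ j ∧ j ≤ n - 1
    · obtain ⟨i, rfl⟩ : ∃ i' : Fin (n - 1), i = i' + 1 := ⟨⟨i - 1, by omega⟩, (Nat.sub_add_cancel hi.1).symm⟩
      obtain ⟨j, rfl⟩ : ∃ j' : Fin (n - 1), j = j' + 1 := ⟨⟨j - 1, by omega⟩, (Nat.sub_add_cancel hj.1).symm⟩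
      rw [sigma_eq_of_s11, sigma_eq_of_s11]
      exact commute_of_braidRels i j (by omega)
    · simp [sigma, hj]
  · simp [sigma, hi]

lemma conj_flype_word {G : Type*} [Group G] {a c : G} (hac : Commute a c) (b : G)
    (v w y x z : ℕ) :
    (a * c⁻¹) * (a⁻¹ * (c * b * c⁻¹) ^ v * b ^ w * (b * a * b⁻¹) ^ x * c ^ y *
        (c * b * c⁻¹) ^ (z + 1)) * (a * c⁻¹)⁻¹ =
      b ^ v * c⁻¹ * b ^ w * (b * a * b⁻¹) ^ x * c ^ (y + 1) * b ^ z *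
        (b * a * b⁻¹)⁻¹ * b := by
  simp only [conj_pow]
  have hcomm : a * c⁻¹ * a⁻¹ * c = 1 := by
    rw [hac.inv_right.eq]; group
  calc _ = (a * c⁻¹ * a⁻¹ * c) * (b ^ v * c⁻¹ * b ^ w * (b * a ^ x * b⁻¹) * c ^ (y + 1) *
        b ^ (z + 1) * a⁻¹) := by group
    _ = _ := by rw [hcomm, one_mul]; group

theorem flype_form_conjugate_general (v w y x z : ℕ) (hz : 1 ≤ z) :
    ∃ α : BraidGroup 4,
      α * ((band 4 1 2)⁻¹ * band 4 2 4 ^ v * band 4 2 3 ^ w * band 4 1 3 ^ x *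
          band 4 3 4 ^ y * band 4 2 4 ^ z) * α⁻¹ =
        band 4 2 3 ^ v * (band 4 3 4)⁻¹ * band 4 2 3 ^ w * band 4 1 3 ^ x *
          band 4 3 4 ^ (y + 1) * band 4 2 3 ^ (z - 1) * (band 4 1 3)⁻¹ * band 4 2 3 := by
  obtain ⟨z, rfl⟩ : ∃ z', z = z' + 1 := ⟨z - 1, by omega⟩
  refine ⟨sigma 4 1 * (sigma 4 3)⁻¹, ?_⟩
  rw [band_self_add_one 4 1, band_self_add_one 4 2, band_self_add_one 4 3,
    band_self_add_two 4 1, band_self_add_two 4 2, Nat.add_sub_cancel]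
  exact conj_flype_word (commute_sigma_of_add_two_le le_rfl) _ v w y x z

/-- In `B₄`, for `v, w, y ≥ 0` and `x, z ≥ 1`, the braid
`σ_{1,2}⁻¹ σ_{2,4}^v σ_{2,3}^w σ_{1,3}^x σ_{3,4}^y σ_{2,4}^z` is conjugate to
`σ_{2,3}^v σ_{3,4}⁻¹ σ_{2,3}^w σ_{1,3}^x σ_{3,4}^{y+1} σ_{2,3}^{z-1} σ_{1,3}⁻¹ σ_{2,3}`. -/
theorem flype_form_conjugate (v w y x z : ℕ) (hx : 1 ≤ x) (hz : 1 ≤ z) :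
    ∃ α : BraidGroup 4,
      α * ((band 4 1 2)⁻¹ * band 4 2 4 ^ v * band 4 2 3 ^ w * band 4 1 3 ^ x *
          band 4 3 4 ^ y * band 4 2 4 ^ z) * α⁻¹ =
        band 4 2 3 ^ v * (band 4 3 4)⁻¹ * band 4 2 3 ^ w * band 4 1 3 ^ x *
          band 4 3 4 ^ (y + 1) * band 4 2 3 ^ (z - 1) * (band 4 1 3)⁻¹ * band 4 2 3 :=
  flype_form_conjugate_general v w y x z hz
end
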